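/- Soundness of the Lighthouse axiom: let A ⊔ B be a partition of 𝒜 and let {C_a}_{a∈A} be a family of subsets of 𝒜 with ‖B‖_a ≤ ‖C_a‖_a for each a ∈ A. If a₀ ∈ B* for some a₀ ∈ A, then there exists ℓ ∈ A with ℓ ∈ (C_ℓ)*. -/

import Mathlib

open Classical Finset

/-- Peer pressure of set `A` on agent `b`: `‖A‖_b = Σ_{a∈A} w(a,b)`. -/
noncomputable def pressure {𝒜 : Type*} [Fintype 𝒜] (w : 𝒜 → 𝒜 → ℝ)
    (A : Finset 𝒜) (b : 𝒜) : ℝ :=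
  ∑ a ∈ A, w a b

/-- Diffusion iterates: `A^0 = A`, `A^{k+1} = A^k ∪ {x : ‖A^k‖_x ≥ θ(x)}`. -/
noncomputable def iterAdopt {𝒜 : Type*} [Fintype 𝒜] (w : 𝒜 → 𝒜 → ℝ) (θ : 𝒜 → ℝ)
    (A : Finset 𝒜) : ℕ → Finset 𝒜
  | 0 => A
  | k + 1 => iterAdopt w θ A k ∪
      Finset.univ.filter (fun x => θ x ≤ pressure w (iterAdopt w θ A k) x)

/-- Star closure: `A* = ⋃_{k≥0} A^k`. -/
noncomputable def starAdopt {𝒜 : Type*} [Fintype 𝒜] (w : 𝒜 → 𝒜 → ℝ) (θ : 𝒜 → ℝ)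
    (A : Finset 𝒜) : Finset 𝒜 :=
  Finset.univ.filter (fun x => ∃ k : ℕ, x ∈ iterAdopt w θ A k)

section Adoption

variable {𝒜 : Type*} [Fintype 𝒜] (w : 𝒜 → 𝒜 → ℝ) (θ : 𝒜 → ℝ)

lemma pressure_mono (hw : ∀ a b, 0 ≤ w a b) {S T : Finset 𝒜} (hST : S ⊆ T) (b : 𝒜) :
    pressure w S b ≤ pressure w T b :=
  Finset.sum_le_sum_of_subset_of_nonneg hST fun a _ _ => hw a b

lemma mem_iterAdopt_succ {S : Finset 𝒜} {k : ℕ} {x : 𝒜} :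
    x ∈ iterAdopt w θ S (k + 1) ↔
      x ∈ iterAdopt w θ S k ∨ θ x ≤ pressure w (iterAdopt w θ S k) x := by
  simp [iterAdopt]

lemma mem_starAdopt {S : Finset 𝒜} {x : 𝒜} :
    x ∈ starAdopt w θ S ↔ ∃ k, x ∈ iterAdopt w θ S k := by
  simp [starAdopt]

lemma mem_starAdopt_of_le_pressure {S : Finset 𝒜} {x : 𝒜} (hx : θ x ≤ pressure w S x) :
    x ∈ starAdopt w θ S :=
  (mem_starAdopt w θ).2 ⟨1, (mem_iterAdopt_succ w θ).2 (Or.inr hx)⟩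

/-- If the cascade started by `T` reaches a set `S` disjoint from `T`, look at the first round
in which it does: some `ℓ ∈ S` adopts at that round, under pressure from a stage that `S` has
not yet entered. -/
lemma exists_first_adopter {S T : Finset 𝒜} (hST : Disjoint S T)
    (hreach : ∃ x ∈ S, x ∈ starAdopt w θ T) :
    ∃ ℓ ∈ S, ∃ m, Disjoint S (iterAdopt w θ T m) ∧
      θ ℓ ≤ pressure w (iterAdopt w θ T m) ℓ := by
  have hP : ∃ n, ∃ x ∈ S, x ∈ iterAdopt w θ T n := by
    obtain ⟨x, hxS, hx⟩ := hreach
    obtain ⟨k, hk⟩ := (mem_starAdopt w θ).1 hx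
    exact ⟨k, x, hxS, hk⟩
  have hmin : ∀ m < Nat.find hP, Disjoint S (iterAdopt w θ T m) := fun m hm =>
    Finset.disjoint_left.2 fun x hxS hx => Nat.find_min hP hm ⟨x, hxS, hx⟩
  obtain ⟨ℓ, hℓS, hℓ⟩ := Nat.find_spec hP
  obtain ⟨m, hm⟩ : ∃ m, Nat.find hP = m + 1 := by
    refine Nat.exists_eq_succ_of_ne_zero fun h0 => ?_
    rw [h0] at hℓ
    exact Finset.disjoint_left.1 hST hℓS hℓ
  have hdisj : Disjoint S (iterAdopt w θ T m) := hmin m (by omega)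
  rw [hm, mem_iterAdopt_succ] at hℓ
  refine ⟨ℓ, hℓS, m, hdisj, hℓ.resolve_left fun h => ?_⟩
  exact Finset.disjoint_left.1 hdisj hℓS h

end Adoption

theorem stmt9_general {𝒜 : Type*} [Fintype 𝒜] (w : 𝒜 → 𝒜 → ℝ) (θ : 𝒜 → ℝ)
    (hw : ∀ a b, 0 ≤ w a b) (A B : Finset 𝒜)
    (hcover : A ∪ B = Finset.univ) (hdisj : A ∩ B = ∅)
    (C : 𝒜 → Finset 𝒜)
    (hC : ∀ a ∈ A, pressure w B a ≤ pressure w (C a) a)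
    (a₀ : 𝒜) (ha₀ : a₀ ∈ A) (hstar : a₀ ∈ starAdopt w θ B) :
    ∃ ℓ ∈ A, ℓ ∈ starAdopt w θ (C ℓ) := by
  obtain ⟨ℓ, hℓA, m, hm, hℓ⟩ := exists_first_adopter w θ
    (Finset.disjoint_iff_inter_eq_empty.2 hdisj) ⟨a₀, ha₀, hstar⟩
  have hsub : iterAdopt w θ B m ⊆ B := fun x hx =>
    (Finset.mem_union.1 (hcover ▸ Finset.mem_univ x)).resolve_left
      fun hxA => Finset.disjoint_left.1 hm hxA hx
  refine ⟨ℓ, hℓA, mem_starAdopt_of_le_pressure w θ ?_⟩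
  calc θ ℓ ≤ pressure w (iterAdopt w θ B m) ℓ := hℓ
    _ ≤ pressure w B ℓ := pressure_mono w hw hsub ℓ
    _ ≤ pressure w (C ℓ) ℓ := hC ℓ hℓA

theorem stmt9 {𝒜 : Type*} [Fintype 𝒜] (w : 𝒜 → 𝒜 → ℝ) (θ : 𝒜 → ℝ)
    (hw : ∀ a b, 0 ≤ w a b) (hθ : ∀ a, 0 ≤ θ a) (A B : Finset 𝒜)
    (hcover : A ∪ B = Finset.univ) (hdisj : A ∩ B = ∅)
    (C : 𝒜 → Finset 𝒜)
    (hC : ∀ a ∈ A, pressure w B a ≤ pressure w (C a) a)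
    (a₀ : 𝒜) (ha₀ : a₀ ∈ A) (hstar : a₀ ∈ starAdopt w θ B) :
    ∃ ℓ ∈ A, ℓ ∈ starAdopt w θ (C ℓ) :=
  stmt9_general w θ hw A B hcover hdisj C hC a₀ ha₀ hstar
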